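/- For every nonempty countable set σ, the space 𝐋_σ is an interior image of the Cantor space: there exists a surjective map from 𝐂 onto L_σ that is continuous and open with respect to the product topology on 𝐂 and the Scott topology on L_σ. -/

import Mathlib

open Set

/-- Finite and infinite `σ`-valued sequences, encoded as functions `ℕ → Option σ` whose
domain of definition is an initial segment of `ℕ`. -/
structure Lgen (σ : Type*) where
  toFun : ℕ → Option σ
  init : ∀ n, toFun (n + 1) ≠ none → toFun n ≠ none

/-- The initial-segment (prefix) partial order on `Lgen σ`. -/
instance Lgen.instPartialOrder {σ : Type*} : PartialOrder (Lgen σ) where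
  le f g := ∀ (n : ℕ) (s : σ), f.toFun n = some s → g.toFun n = some s
  le_refl f n s h := h
  le_trans f g h hfg hgh n s hs := hgh n s (hfg n s hs)
  le_antisymm f g hfg hgf := by
    obtain ⟨ff, hf⟩ := f
    obtain ⟨gf, hg⟩ := g
    have hfun : ff = gf := by
      funext n
      cases hfn : ff n with
      | some s =>
        have h2 : gf n = some s := hfg n s hfn
        exact h2.symm
      | none =>
        cases hgn : gf n with
        | some s =>
          have h2 : ff n = some s := hgf n s hgn
          rw [hfn] at h2
          exact absurd h2 (by simp)
        | none => rfl
    subst hfun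
    rfl

/-- The finite sequence given by a list, as an element of `Lgen σ`. -/
def Lgen.ofList {σ : Type*} (l : List σ) : Lgen σ where
  toFun n := l[n]?
  init n h := by
    simp only [ne_eq, List.getElem?_eq_none_iff, not_le] at h ⊢
    omega

/-- The infinite binary tree with limits `L₂`: finite and infinite binary sequences with the
initial-segment order. -/
abbrev L2 : Type := Lgen Bool

/-- The Scott topology of a preorder: opens are the upper sets `U` such that every nonempty
directed set whose least upper bound lies in `U` meets `U`. -/
def scottTopology (α : Type*) [Preorder α] : TopologicalSpace α where
  IsOpen U := IsUpperSet U ∧ ∀ d : Set α, d.Nonempty → DirectedOn (· ≤ ·) d →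
      ∀ x, IsLUB d x → x ∈ U → (d ∩ U).Nonempty
  isOpen_univ := ⟨isUpperSet_univ, fun d hd _ _ _ _ => hd.imp fun y hy => ⟨hy, mem_univ y⟩⟩
  isOpen_inter := by
    rintro U V ⟨hU1, hU2⟩ ⟨hV1, hV2⟩
    refine ⟨hU1.inter hV1, fun d hdne hdir x hlub hx => ?_⟩
    obtain ⟨a, ha, haU⟩ := hU2 d hdne hdir x hlub hx.1
    obtain ⟨b, hb, hbV⟩ := hV2 d hdne hdir x hlub hx.2
    obtain ⟨c, hc, hac, hbc⟩ := hdir a ha b hb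
    exact ⟨c, hc, hU1 hac haU, hV1 hbc hbV⟩
  isOpen_sUnion := by
    intro S hS
    refine ⟨fun a b hab ha => ?_, fun d hdne hdir x hlub hx => ?_⟩
    · obtain ⟨U, hU, haU⟩ := ha
      exact ⟨U, hU, (hS U hU).1 hab haU⟩
    · obtain ⟨U, hU, hxU⟩ := hx
      obtain ⟨a, ha, haU⟩ := (hS U hU).2 d hdne hdir x hlub hxU
      exact ⟨a, ha, U, hU, haU⟩

/-- Each poset `L_σ` of finite and infinite `σ`-valued sequences carries the Scott topology. -/
instance {σ : Type*} : TopologicalSpace (Lgen σ) := scottTopology (Lgen σ)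

/-!
Fix `e : ℕ → σ` taking every value infinitely often and send `x : ℕ → Bool` to the sequence
`e i₀, e i₁, …`, where `i₀ < i₁ < ⋯` are the zeros of `x`. Every entry of the output is decided by
a finite prefix of `x`, and every Scott-open set containing `g` already contains a finite
truncation of `g`; this gives continuity. After a prefix `w` the remaining bits are free, and as
`e` hits every symbol beyond any bound they can be chosen to append any finite or infinite
continuation to the word decoded from `w`. So the cylinder of `w` is mapped onto the upper set of
that finite word, which is Scott-open; this gives openness and surjectivity.
-/

open Filter Topology

theorem List.IsPrefix.getElem?_eq_some {α : Type*} {l l' : List α} (h : l <+: l') {n : ℕ} {a : α}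
    (ha : l[n]? = some a) : l'[n]? = some a := by
  obtain ⟨t, rfl⟩ := h
  rwa [List.getElem?_append_left (List.getElem?_eq_some_iff.1 ha).1]

namespace Lgen

variable {σ : Type*}

@[ext]
theorem ext {f g : Lgen σ} (h : f.toFun = g.toFun) : f = g := by
  cases f; cases g; cases h; rfl

theorem le_iff {f g : Lgen σ} :
    f ≤ g ↔ ∀ n s, f.toFun n = some s → g.toFun n = some s := Iff.rfl

@[simp]
theorem ofList_toFun (l : List σ) (n : ℕ) : (ofList l).toFun n = l[n]? := rfl

theorem toFun_ne_none_of_le (g : Lgen σ) {m n : ℕ} (hmn : m ≤ n) (hn : g.toFun n ≠ none) :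
    g.toFun m ≠ none := by
  induction n, hmn using Nat.le_induction with
  | base => exact hn
  | succ n _ ih => exact ih (g.init n hn)

def trunc (g : Lgen σ) (N : ℕ) : Lgen σ where
  toFun n := if n < N then g.toFun n else none
  init n h := by
    split_ifs at h
    · rw [if_pos (by omega)]
      exact g.init n h
    · exact (h rfl).elim

@[simp]
theorem trunc_toFun (g : Lgen σ) (N n : ℕ) :
    (g.trunc N).toFun n = if n < N then g.toFun n else none := rfl

theorem trunc_le (g : Lgen σ) (N : ℕ) : g.trunc N ≤ g := by
  intro n s h
  simp only [trunc_toFun] at h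
  split_ifs at h
  exact h

theorem monotone_trunc (g : Lgen σ) : Monotone g.trunc := by
  intro N N' hN n s h
  simp only [trunc_toFun] at h ⊢
  split_ifs at h
  rwa [if_pos (by omega)]

theorem isLUB_range_trunc (g : Lgen σ) : IsLUB (range g.trunc) g := by
  refine ⟨forall_mem_range.2 g.trunc_le, fun b hb n s hs => ?_⟩
  exact hb (mem_range_self (n + 1)) n s (by simpa using hs)

theorem exists_trunc_mem_of_isOpen {U : Set (Lgen σ)} (hU : IsOpen U) {g : Lgen σ} (hg : g ∈ U) :
    ∃ N, g.trunc N ∈ U := by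
  obtain ⟨_, ⟨N, rfl⟩, hN⟩ := hU.2 _ (range_nonempty _)
    (directedOn_range.2 g.monotone_trunc.directed_le) g g.isLUB_range_trunc hg
  exact ⟨N, hN⟩

-- If no member of `d` had the entry `s` at `n`, the truncation of `g` at `n` would bound `d`.
theorem exists_mem_toFun_eq_of_isLUB {d : Set (Lgen σ)} {g : Lgen σ} (hd : IsLUB d g) {n : ℕ}
    {s : σ} (hn : g.toFun n = some s) : ∃ a ∈ d, a.toFun n = some s := by
  by_contra! hne
  have hub : g.trunc n ∈ upperBounds d := by
    intro a ha i t hit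
    have hlt : i < n := by
      by_contra! hni
      have han : a.toFun n ≠ none := a.toFun_ne_none_of_le hni (by simp [hit])
      obtain ⟨u, hu⟩ := Option.ne_none_iff_exists'.1 han
      have := hd.1 ha n u hu
      rw [hn] at this
      exact hne a ha (by rw [hu, this])
    simpa [hlt] using hd.1 ha i t hit
  simpa using hd.2 hub n s hn

theorem isOpen_setOf_toFun_eq (n : ℕ) (s : σ) : IsOpen {g : Lgen σ | g.toFun n = some s} :=
  ⟨fun _ _ hab ha => hab n s ha, fun _ _ _ _ hd hg => exists_mem_toFun_eq_of_isLUB hd hg⟩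

theorem isOpen_Ici_ofList (l : List σ) : IsOpen (Ici (ofList l)) := by
  have : Ici (ofList l) = ⋂ i : Fin l.length, {g | g.toFun i = some l[i]} := by
    ext g
    simp only [mem_Ici, le_iff, ofList_toFun, List.getElem?_eq_some_iff, mem_iInter, mem_ofPred_eq]
    exact ⟨fun h i => h i _ ⟨i.2, rfl⟩, fun h n s ⟨hn, hs⟩ => hs ▸ h ⟨n, hn⟩⟩
  rw [this]
  exact isOpen_iInter_of_finite fun i => isOpen_setOf_toFun_eq _ _

theorem continuous_of_isOpen_setOf_toFun_eq {X : Type*} [TopologicalSpace X] {f : X → Lgen σ}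
    (hf : ∀ n s, IsOpen {x | (f x).toFun n = some s}) : Continuous f := by
  refine continuous_def.2 fun U hU => isOpen_iff_mem_nhds.2 fun x hx => ?_
  obtain ⟨N, hN⟩ := exists_trunc_mem_of_isOpen hU hx
  have hentry : ∀ n, ∀ᶠ y in 𝓝 x, ∀ s, (f x).toFun n = some s → (f y).toFun n = some s := by
    intro n
    cases h : (f x).toFun n with
    | none => simp
    | some s => filter_upwards [(hf n s).mem_nhds h] with y hy using by simpa
  filter_upwards [(eventually_all_finset (Finset.range N)).2 fun n _ => hentry n] with y hy
  refine hU.1 (fun n s hs => ?_) hN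
  simp only [trunc_toFun] at hs
  split_ifs at hs with hn
  exact hy n (Finset.mem_range.2 hn) s hs

theorem ofList_eq_trunc_length {l : List σ} {g : Lgen σ} (h : ofList l ≤ g) :
    ofList l = g.trunc l.length := by
  refine ext (funext fun n => ?_)
  simp only [ofList_toFun, trunc_toFun]
  split_ifs with hn
  · exact (h n _ (List.getElem?_eq_getElem hn)).symm ▸ List.getElem?_eq_getElem hn
  · exact List.getElem?_eq_none (by omega)

theorem ofList_append_toList_eq_trunc_succ {l : List σ} {g : Lgen σ} {N : ℕ}
    (h : ofList l = g.trunc N) : ofList (l ++ (g.toFun N).toList) = g.trunc (N + 1) := by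
  have hl : ∀ n, l[n]? = if n < N then g.toFun n else none := fun n => by
    rw [← trunc_toFun, ← h, ofList_toFun]
  have hlen : l.length ≤ N := by
    by_contra! hN
    simpa [List.getElem?_eq_getElem hN] using hl N
  refine ext (funext fun n => ?_)
  simp only [ofList_toFun, trunc_toFun]
  cases hgN : g.toFun N with
  | none =>
    rw [Option.toList_none, List.append_nil, hl]
    rcases lt_trichotomy n N with hn | rfl | hn
    · simp [hn, show n < N + 1 by omega]
    · simp [hgN]
    · simp [show ¬n < N by omega, show ¬n < N + 1 by omega]
  | some s =>
    have hlenN : l.length = N := by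
      rcases Nat.eq_zero_or_pos N with rfl | hN
      · omega
      have hdef := g.toFun_ne_none_of_le (Nat.sub_le N 1) (by simp [hgN])
      have : l[N - 1]? ≠ none := by rwa [hl, if_pos (by omega)]
      simp only [ne_eq, List.getElem?_eq_none_iff, not_le] at this
      omega
    rw [Option.toList_some]
    rcases lt_trichotomy n N with hn | rfl | hn
    · rw [List.getElem?_append_left (by omega), hl, if_pos hn, if_pos (by omega)]
    · rw [List.getElem?_append_right (by omega), hlenN, Nat.sub_self, if_pos (by omega), hgN]
      rfl
    · rw [if_neg (by omega)]
      exact List.getElem?_eq_none (by simp; omega)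

open Classical in
noncomputable def ofPrefixChain (c : ℕ → List σ) : Lgen σ where
  toFun n := if h : ∃ M, n < (c M).length then (c (Nat.find h))[n]? else none
  init n h := by
    obtain ⟨M, hM⟩ : ∃ M, n + 1 < (c M).length := by
      by_contra hc
      exact h (dif_neg hc)
    have hn : ∃ M, n < (c M).length := ⟨M, by omega⟩
    simpa [dif_pos hn] using Nat.find_spec hn

theorem ofPrefixChain_toFun_eq_some {c : ℕ → List σ} (hc : ∀ ⦃a b⦄, a ≤ b → c a <+: c b)
    {n : ℕ} {s : σ} : (ofPrefixChain c).toFun n = some s ↔ ∃ M, (c M)[n]? = some s := by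
  simp only [ofPrefixChain]
  constructor
  · intro h
    split_ifs at h with hn
    exact ⟨_, h⟩
  · rintro ⟨M, hM⟩
    have hn : ∃ M, n < (c M).length := ⟨M, (List.getElem?_eq_some_iff.1 hM).1⟩
    rw [dif_pos hn]
    rcases le_total M (Nat.find hn) with hle | hle
    · exact (hc hle).getElem?_eq_some hM
    · have h := List.getElem?_eq_getElem (Nat.find_spec hn)
      rw [h, ← hM, (hc hle).getElem?_eq_some h]

end Lgen

theorem exists_forall_frequently_eq (σ : Type*) [Countable σ] [Nonempty σ] :
    ∃ e : ℕ → σ, ∀ s, ∃ᶠ i in atTop, e i = s := by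
  obtain ⟨e, he⟩ := exists_surjective_nat σ
  refine ⟨fun n => e n.unpair.2, fun s => frequently_atTop.2 fun b => ?_⟩
  obtain ⟨j, rfl⟩ := he s
  exact ⟨Nat.pair b j, Nat.left_le_pair b j, by simp⟩

namespace Cantor

open Lgen PiNat

variable {σ : Type*} (e : ℕ → σ)

def decodeUpTo (x : ℕ → Bool) : ℕ → List σ
  | 0 => []
  | M + 1 => decodeUpTo x M ++ if x M then [] else [e M]

variable {e}

theorem decodeUpTo_prefix {x : ℕ → Bool} ⦃a b : ℕ⦄ (hab : a ≤ b) :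
    decodeUpTo e x a <+: decodeUpTo e x b := by
  induction b, hab using Nat.le_induction with
  | base => exact List.prefix_refl _
  | succ b _ ih => exact ih.trans (List.prefix_append _ _)

theorem decodeUpTo_eq_of_mem_cylinder {x y : ℕ → Bool} {M : ℕ} (hy : y ∈ cylinder x M) :
    decodeUpTo e y M = decodeUpTo e x M := by
  induction M with
  | zero => rfl
  | succ M ih =>
    simp only [decodeUpTo, hy M (Nat.lt_succ_self M),
      ih (cylinder_anti x (Nat.le_succ M) hy)]

theorem decodeUpTo_eq_of_forall_eq_true {x : ℕ → Bool} {a b : ℕ} (hab : a ≤ b)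
    (hx : ∀ i, a ≤ i → i < b → x i = true) : decodeUpTo e x b = decodeUpTo e x a := by
  induction b, hab using Nat.le_induction with
  | base => rfl
  | succ b hab ih =>
    simp only [decodeUpTo, hx b hab (Nat.lt_succ_self b), if_true, List.append_nil]
    exact ih fun i hai hib => hx i hai (by omega)

variable (e)

noncomputable def decode (x : ℕ → Bool) : Lgen σ := ofPrefixChain (decodeUpTo e x)

variable {e}

theorem decode_toFun_eq_some {x : ℕ → Bool} {n : ℕ} {s : σ} :
    (decode e x).toFun n = some s ↔ ∃ M, (decodeUpTo e x M)[n]? = some s :=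
  ofPrefixChain_toFun_eq_some decodeUpTo_prefix

theorem ofList_decodeUpTo_le_decode (x : ℕ → Bool) (M : ℕ) :
    ofList (decodeUpTo e x M) ≤ decode e x :=
  fun _ _ h => decode_toFun_eq_some.2 ⟨M, h⟩

theorem continuous_decode : Continuous (decode e) := by
  refine continuous_of_isOpen_setOf_toFun_eq fun n s => ?_
  simp_rw [decode_toFun_eq_some, ofPred_exists]
  refine isOpen_iUnion fun M => isOpen_iff_forall_mem_open.2 fun x hx => ?_
  refine ⟨cylinder x M, fun y hy => ?_, isOpen_cylinder _ x M, self_mem_cylinder x M⟩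
  rwa [mem_ofPred_eq, decodeUpTo_eq_of_mem_cylinder hy]

section Blocks

variable (he : ∀ s, ∃ᶠ i in atTop, e i = s) (t : ℕ → Option σ) (M : ℕ)

/- To realise a prescribed continuation `t` after position `M`, the bits from `M` on are cut into
consecutive blocks `[blockStart n, blockStart (n + 1))`; the `n`-th block ends at `zeroPos n`,
an index where `e` takes the value `t n`, and this is a zero exactly when `t n` is defined. -/
noncomputable def blockStart : ℕ → ℕ
  | 0 => M
  | n + 1 => Classical.choose (frequently_atTop.1 (he ((t n).getD (e 0))) (blockStart n)) + 1

noncomputable def zeroPos (n : ℕ) : ℕ :=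
  Classical.choose (frequently_atTop.1 (he ((t n).getD (e 0))) (blockStart he t M n))

open Classical in
noncomputable def tailBits (i : ℕ) : Bool := !decide (∃ n, zeroPos he t M n = i ∧ (t n).isSome)

theorem blockStart_succ (n : ℕ) : blockStart he t M (n + 1) = zeroPos he t M n + 1 := rfl

theorem blockStart_le_zeroPos (n : ℕ) : blockStart he t M n ≤ zeroPos he t M n :=
  (Classical.choose_spec (frequently_atTop.1 (he ((t n).getD (e 0))) (blockStart he t M n))).1

theorem apply_zeroPos (n : ℕ) : e (zeroPos he t M n) = (t n).getD (e 0) :=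
  (Classical.choose_spec (frequently_atTop.1 (he ((t n).getD (e 0))) (blockStart he t M n))).2

theorem strictMono_blockStart : StrictMono (blockStart he t M) :=
  strictMono_nat_of_lt_succ fun n => by
    rw [blockStart_succ]
    exact Nat.lt_succ_of_le (blockStart_le_zeroPos he t M n)

theorem eq_of_zeroPos_mem_Ico {n n' : ℕ}
    (h : zeroPos he t M n' ∈ Ico (blockStart he t M n) (blockStart he t M (n + 1))) : n' = n := by
  have hmono := (strictMono_blockStart he t M).monotone
  rcases lt_trichotomy n' n with hlt | rfl | hlt
  · have := hmono (Nat.succ_le_of_lt hlt)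
    rw [blockStart_succ] at this
    exact absurd h.1 (by omega)
  · rfl
  · have := hmono (show n + 1 ≤ n' by omega)
    have := blockStart_le_zeroPos he t M n'
    exact absurd h.2 (by omega)

theorem decodeUpTo_blockStart_succ {y : ℕ → Bool} (hy : ∀ i, M ≤ i → y i = tailBits he t M i)
    (n : ℕ) : decodeUpTo e y (blockStart he t M (n + 1)) =
      decodeUpTo e y (blockStart he t M n) ++ (t n).toList := by
  have hM : M ≤ blockStart he t M n := (strictMono_blockStart he t M).monotone n.zero_le
  have hzero : ∀ i ∈ Ico (blockStart he t M n) (blockStart he t M (n + 1)),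
      y i = false ↔ i = zeroPos he t M n ∧ (t n).isSome := by
    intro i hi
    rw [hy i (hM.trans hi.1)]
    simp only [tailBits, Bool.not_eq_false', decide_eq_true_eq]
    constructor
    · rintro ⟨n', rfl, hn'⟩
      obtain rfl := eq_of_zeroPos_mem_Ico he t M hi
      exact ⟨rfl, hn'⟩
    · rintro ⟨rfl, hn⟩
      exact ⟨n, rfl, hn⟩
  have hlast := hzero (zeroPos he t M n) ⟨blockStart_le_zeroPos he t M n, by
    rw [blockStart_succ]; omega⟩
  rw [blockStart_succ, decodeUpTo,
    decodeUpTo_eq_of_forall_eq_true (blockStart_le_zeroPos he t M n) fun i h1 h2 => ?_]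
  · cases htn : t n with
    | none => simp_all
    | some s => simp_all [apply_zeroPos he t M n]
  · have hi : i ∈ Ico (blockStart he t M n) (blockStart he t M (n + 1)) :=
      ⟨h1, by rw [blockStart_succ]; omega⟩
    by_contra hyi
    have := ((hzero i hi).1 (by simpa using hyi)).1
    omega

end Blocks

theorem exists_mem_cylinder_decode_eq (he : ∀ s, ∃ᶠ i in atTop, e i = s) {M : ℕ}
    {x : ℕ → Bool} {g : Lgen σ} (hg : ofList (decodeUpTo e x M) ≤ g) :
    ∃ y ∈ cylinder x M, decode e y = g := by
  classical
  set m := (decodeUpTo e x M).length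
  set t : ℕ → Option σ := fun n => g.toFun (m + n)
  set y : ℕ → Bool := fun i => if i < M then x i else tailBits he t M i
  have hyx : y ∈ cylinder x M := fun i hi => if_pos hi
  have htrunc : ∀ n, ofList (decodeUpTo e y (blockStart he t M n)) = g.trunc (m + n) := by
    intro n
    induction n with
    | zero => rw [blockStart, decodeUpTo_eq_of_mem_cylinder hyx]; exact ofList_eq_trunc_length hg
    | succ n ih =>
      rw [decodeUpTo_blockStart_succ he t M (fun i hi => if_neg (by omega)), ← add_assoc]
      exact ofList_append_toList_eq_trunc_succ ih
  refine ⟨y, hyx, ext (funext fun n => Option.ext fun s => ?_)⟩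
  rw [decode_toFun_eq_some]
  constructor
  · rintro ⟨N, hN⟩
    have hpre := decodeUpTo_prefix (e := e) (x := y) ((strictMono_blockStart he t M).id_le N)
    have := hpre.getElem?_eq_some hN
    rw [← ofList_toFun, htrunc] at this
    exact trunc_le _ _ n s this
  · intro hs
    refine ⟨blockStart he t M (n + 1), ?_⟩
    rw [← ofList_toFun, htrunc, trunc_toFun, if_pos (by omega), hs]

theorem image_decode_cylinder (he : ∀ s, ∃ᶠ i in atTop, e i = s) (x : ℕ → Bool) (M : ℕ) :
    decode e '' cylinder x M = Ici (ofList (decodeUpTo e x M)) := by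
  refine subset_antisymm ?_ fun g hg => exists_mem_cylinder_decode_eq he hg
  rintro _ ⟨y, hy, rfl⟩
  rw [mem_Ici, ← decodeUpTo_eq_of_mem_cylinder hy]
  exact ofList_decodeUpTo_le_decode y M

end Cantor

/-- For every nonempty countable `σ`, the space `𝐋_σ` is an interior image
of the Cantor space: there is a surjective map from `ℕ → Bool` (with the product topology)
onto `L_σ` (with the Scott topology) that is continuous and open. -/
theorem statement11 (σ : Type*) [Countable σ] [Nonempty σ] :
    ∃ f : (ℕ → Bool) → Lgen σ, Function.Surjective f ∧ Continuous f ∧ IsOpenMap f := by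
  obtain ⟨e, he⟩ := exists_forall_frequently_eq σ
  refine ⟨Cantor.decode e, fun g => ?_, Cantor.continuous_decode, ?_⟩
  · obtain ⟨y, -, hy⟩ := Cantor.exists_mem_cylinder_decode_eq he (M := 0) (x := fun _ => true)
      (g := g) fun n s h => by simp [Cantor.decodeUpTo] at h
    exact ⟨y, hy⟩
  · refine (PiNat.isTopologicalBasis_cylinders fun _ => Bool).isOpenMap_iff.2 ?_
    rintro _ ⟨x, M, rfl⟩
    rw [Cantor.image_decode_cylinder he]
    exact Lgen.isOpen_Ici_ofList _
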